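/- Let Fₙ(h) = (1/2)ρₙ - rₙᵀh + (1/2)hᵀRₙh + Ψ(h), where Ψ(h) = (1/2)hᵀV₀h - v₀ᵀh + Σ_{s=1}^S ψ_s(‖V_s h - v_s‖), each ψ_s being even, C¹, with ψ_s(√·) concave on [0,∞) and ν_s(t) = ψ'_s(t)/t bounded and nonnegative. Then for every h, the function Θₙ(h', h) = Fₙ(h) + ∇Fₙ(h)ᵀ(h' - h) + (1/2)(h' - h)ᵀAₙ(h)(h' - h), with Aₙ(h) = Rₙ + V₀ + Vᵀ Diag(b(h)) V where V stacks V₁,...,V_S and b(h) repeats ν_s(‖V_s h - v_s‖) over coordinate blocks, is a tangent majorant of Fₙ at h: Fₙ(h') ≤ Θₙ(h', h) for all h' and Fₙ(h) = Θₙ(h, h). -/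

import Mathlib

/-!
The quadratic part of `Fₙ` equals its own second-order Taylor expansion. For a penalty term
`ψ ‖u‖`, concavity of `g = ψ ∘ √` on `[0, ∞)` gives the tangent bound
`g (b²) ≤ g (a²) + g' (a²) (b² - a²)` with `g' (a²) = ν a / 2`; expanding
`‖u + d‖² = ‖u‖² + 2 ⟪u, d⟫ + ‖d‖²` turns it into a quadratic majorant with curvature `ν ‖u‖`
whose linear part is the derivative of `ψ ∘ ‖·‖` at `u` (also at `u = 0`, because
`ψ' t = t ν t → 0`). Such majorants add up, and composing with `h ↦ Vₛ h - vₛ` yields `Aₙ(h)`.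
-/

open Matrix

/-- Euclidean norm of a vector in `Fin P → ℝ`. -/
noncomputable def enorm {P : ℕ} (x : Fin P → ℝ) : ℝ :=
  Real.sqrt (∑ i, x i ^ 2)

open Filter Topology Set

theorem ConcaveOn.le_add_mul_sub_of_hasDerivAt {S : Set ℝ} {f : ℝ → ℝ} {f' x y : ℝ}
    (hf : ConcaveOn ℝ S f) (hx : x ∈ S) (hy : y ∈ S) (hf' : HasDerivAt f f' x) :
    f y ≤ f x + f' * (y - x) := by
  rcases lt_trichotomy y x with hyx | rfl | hxy
  · have := hf.le_slope_of_hasDerivAt hy hx hyx hf'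
    rw [slope_def_field, le_div_iff₀ (sub_pos.2 hyx)] at this
    linarith
  · simp
  · have := hf.slope_le_of_hasDerivAt hx hy hxy hf'
    rw [slope_def_field, div_le_iff₀ (sub_pos.2 hxy)] at this
    linarith

section Profile

variable {ψ ν : ℝ → ℝ}

theorem deriv_eq_zero_of_tendsto_deriv_div (hψ' : ContinuousAt (deriv ψ) 0) {c : ℝ}
    (hlim : Tendsto (fun t => deriv ψ t / t) (𝓝[≠] 0) (𝓝 c)) : deriv ψ 0 = 0 := by
  have hmul : Tendsto (fun t => t * (deriv ψ t / t)) (𝓝[≠] 0) (𝓝 (0 * c)) :=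
    (tendsto_nhdsWithin_of_tendsto_nhds tendsto_id).mul hlim
  refine tendsto_nhds_unique (hψ'.tendsto.mono_left (nhdsWithin_le_nhds (s := {0}ᶜ))) ?_
  rw [zero_mul] at hmul
  refine hmul.congr' (eventually_nhdsWithin_of_forall fun t ht => ?_)
  exact mul_div_cancel₀ _ ht

theorem hasDerivAt_comp_sqrt (hψ : Differentiable ℝ ψ)
    (hν : ∀ t, t ≠ 0 → ν t = deriv ψ t / t) {a : ℝ} (ha : 0 < a) :
    HasDerivAt (fun t => ψ (Real.sqrt t)) (ν a / 2) (a ^ 2) := by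
  have hsqrt : HasDerivAt Real.sqrt (1 / (2 * a)) (a ^ 2) := by
    simpa [Real.sqrt_sq ha.le] using Real.hasDerivAt_sqrt (pow_ne_zero 2 ha.ne')
  have hψa : HasDerivAt ψ (deriv ψ a) (Real.sqrt (a ^ 2)) := by
    rw [Real.sqrt_sq ha.le]; exact (hψ a).hasDerivAt
  refine (hψa.comp (a ^ 2) hsqrt).congr_deriv ?_
  rw [hν a ha.ne']
  field_simp

/-- The tangent to the concave function `t ↦ ψ (√t)` at `a²`, evaluated at `b²`. -/
theorem le_add_mul_sq_sub_sq (hψ : Differentiable ℝ ψ)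
    (hconc : ConcaveOn ℝ (Ici 0) fun t => ψ (Real.sqrt t))
    (hν : ∀ t, t ≠ 0 → ν t = deriv ψ t / t)
    (hνlim : Tendsto (fun t => deriv ψ t / t) (𝓝[≠] 0) (𝓝 (ν 0)))
    {a b : ℝ} (ha : 0 ≤ a) (hb : 0 ≤ b) :
    ψ b ≤ ψ a + ν a / 2 * (b ^ 2 - a ^ 2) := by
  have hpos : ∀ {a : ℝ}, 0 < a → ψ b ≤ ψ a + ν a / 2 * (b ^ 2 - a ^ 2) := fun {a} ha => by
    simpa [Real.sqrt_sq ha.le, Real.sqrt_sq hb] using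
      hconc.le_add_mul_sub_of_hasDerivAt (sq_nonneg a) (sq_nonneg b)
        (hasDerivAt_comp_sqrt hψ hν ha)
  rcases ha.lt_or_eq with ha | rfl
  · exact hpos ha
  -- `t ↦ ψ (√t)` need not be differentiable at `0`, so let `a → 0⁺` instead
  have hνlim' : Tendsto ν (𝓝[>] 0) (𝓝 (ν 0)) :=
    (hνlim.mono_left (nhdsWithin_mono _ fun t ht => ne_of_gt ht)).congr'
      (eventually_nhdsWithin_of_forall fun t ht => (hν t (ne_of_gt ht)).symm)
  have hlim : Tendsto (fun a => ψ a + ν a / 2 * (b ^ 2 - a ^ 2)) (𝓝[>] 0)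
      (𝓝 (ψ 0 + ν 0 / 2 * (b ^ 2 - 0 ^ 2))) := by
    refine ((hψ.continuous.tendsto 0).mono_left nhdsWithin_le_nhds).add
      ((hνlim'.div_const 2).mul ?_)
    exact ((continuous_const.sub (continuous_pow 2)).tendsto 0).mono_left nhdsWithin_le_nhds
  exact ge_of_tendsto hlim (eventually_nhdsWithin_of_forall fun a ha => hpos ha)

end Profile

def HasTangentMajorantAt {E : Type*} [NormedAddCommGroup E] [NormedSpace ℝ E]
    (f : E → ℝ) (f' : E →L[ℝ] ℝ) (q : E → ℝ) (x : E) : Prop :=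
  HasFDerivAt f f' x ∧ ∀ d, f (x + d) ≤ f x + f' d + q d

namespace HasTangentMajorantAt

variable {E F : Type*} [NormedAddCommGroup E] [NormedSpace ℝ E]
  [NormedAddCommGroup F] [NormedSpace ℝ F]
  {f g : E → ℝ} {f' g' : E →L[ℝ] ℝ} {p q : E → ℝ} {x : E}

theorem add (hf : HasTangentMajorantAt f f' p x) (hg : HasTangentMajorantAt g g' q x) :
    HasTangentMajorantAt (fun y => f y + g y) (f' + g') (fun d => p d + q d) x :=
  ⟨hf.1.add hg.1, fun d => by
    simp only [_root_.add_apply]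
    linarith [hf.2 d, hg.2 d]⟩

theorem sum {ι : Type*} (s : Finset ι) {f : ι → E → ℝ} {f' : ι → E →L[ℝ] ℝ} {q : ι → E → ℝ}
    (h : ∀ i ∈ s, HasTangentMajorantAt (f i) (f' i) (q i) x) :
    HasTangentMajorantAt (fun y => ∑ i ∈ s, f i y) (∑ i ∈ s, f' i)
      (fun d => ∑ i ∈ s, q i d) x :=
  ⟨HasFDerivAt.fun_sum fun i hi => (h i hi).1, fun d => by
    simp only [_root_.sum_apply, ← Finset.sum_add_distrib]
    exact Finset.sum_le_sum fun i hi => (h i hi).2 d⟩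

theorem comp_affine {g : F → ℝ} {g' : F →L[ℝ] ℝ} {q : F → ℝ} (c : F) (A : E →L[ℝ] F)
    (hg : HasTangentMajorantAt g g' q (c + A x)) :
    HasTangentMajorantAt (fun y => g (c + A y)) (g' ∘L A) (fun d => q (A d)) x :=
  ⟨hg.1.comp x ((A.hasFDerivAt).const_add c), fun d => by
    simpa only [map_add, add_assoc, ContinuousLinearMap.comp_apply] using hg.2 (A d)⟩

end HasTangentMajorantAt

theorem hasTangentMajorantAt_quadratic {E : Type*} [NormedAddCommGroup E] [NormedSpace ℝ E]
    (c : ℝ) (ℓ : E →L[ℝ] ℝ) (B : E →L[ℝ] E →L[ℝ] ℝ) (hB : ∀ x y, B x y = B y x) (x : E) :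
    HasTangentMajorantAt (fun y => c + ℓ y + 1 / 2 * B y y) (ℓ + B x)
      (fun d => 1 / 2 * B d d) x := by
  refine ⟨?_, fun d => le_of_eq ?_⟩
  · have hB' := B.hasFDerivAt_of_bilinear (hasFDerivAt_id x) (hasFDerivAt_id x)
    refine (((hasFDerivAt_const c x).add ℓ.hasFDerivAt).add (hB'.const_mul (1 / 2))).congr_fderiv ?_
    ext d
    simp only [zero_add, one_div, id_eq, ContinuousLinearMap.precompR_apply,
      ContinuousLinearMap.compL_apply, ContinuousLinearMap.comp_id, smul_add, _root_.add_apply,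
      _root_.smul_apply, smul_eq_mul, ContinuousLinearMap.precompL_apply,
      ContinuousLinearMap.id_apply, hB d x, add_right_inj]
    ring
  · simp only [map_add, _root_.add_apply, hB d x]
    ring

section NormComposition

open scoped RealInnerProductSpace

variable {F : Type*} [NormedAddCommGroup F] [InnerProductSpace ℝ F] {ψ ν : ℝ → ℝ}

theorem hasFDerivAt_comp_norm (hψ : Differentiable ℝ ψ) (hψ0 : deriv ψ 0 = 0)
    (hν : ∀ t, t ≠ 0 → ν t = deriv ψ t / t) (x : F) :
    HasFDerivAt (fun y => ψ ‖y‖) (ν ‖x‖ • innerSL ℝ x) x := by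
  rcases eq_or_ne x 0 with rfl | hx
  · have hψ0' := (hψ 0).hasDerivAt
    rw [hψ0, hasDerivAt_iff_isLittleO_nhds_zero] at hψ0'
    rw [hasFDerivAt_iff_isLittleO_nhds_zero, ← Asymptotics.isLittleO_norm_right]
    simpa [Function.comp_def] using hψ0'.comp_tendsto tendsto_norm_zero
  · have hsq := (hasDerivAt_comp_sqrt hψ hν (norm_pos_iff.2 hx)).comp_hasFDerivAt x
      (hasStrictFDerivAt_norm_sq x).hasFDerivAt
    have hcomp : ((fun t => ψ (Real.sqrt t)) ∘ fun y : F => ‖y‖ ^ 2) = fun y => ψ ‖y‖ :=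
      funext fun y => by simp [Real.sqrt_sq (norm_nonneg y)]
    rw [hcomp] at hsq
    refine hsq.congr_fderiv ?_
    ext d
    simp only [_root_.smul_apply, coe_innerSL_apply, nsmul_eq_mul, Nat.cast_ofNat, smul_eq_mul]
    ring

theorem hasTangentMajorantAt_comp_norm (hψ : Differentiable ℝ ψ)
    (hψ' : ContinuousAt (deriv ψ) 0)
    (hconc : ConcaveOn ℝ (Ici 0) fun t => ψ (Real.sqrt t))
    (hν : ∀ t, t ≠ 0 → ν t = deriv ψ t / t)
    (hνlim : Tendsto (fun t => deriv ψ t / t) (𝓝[≠] 0) (𝓝 (ν 0))) (x : F) :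
    HasTangentMajorantAt (fun y => ψ ‖y‖) (ν ‖x‖ • innerSL ℝ x)
      (fun d => ν ‖x‖ / 2 * ‖d‖ ^ 2) x := by
  refine ⟨hasFDerivAt_comp_norm hψ (deriv_eq_zero_of_tendsto_deriv_div hψ' hνlim) hν x,
    fun d => ?_⟩
  have := le_add_mul_sq_sub_sq hψ hconc hν hνlim (norm_nonneg x) (norm_nonneg (x + d))
  rw [norm_add_sq_real] at this
  simp only [_root_.smul_apply, innerSL_apply_apply, smul_eq_mul]
  linarith

end NormComposition

namespace Matrix

variable {m n : Type*} [Fintype m] [Fintype n]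

theorem IsSymm.dotProduct_mulVec_comm {M : Matrix n n ℝ} (hM : M.IsSymm) (x y : n → ℝ) :
    x ⬝ᵥ M *ᵥ y = y ⬝ᵥ M *ᵥ x := by
  rw [dotProduct_mulVec, ← mulVec_transpose, hM.eq, dotProduct_comm]

noncomputable def mulVecToEuclidean (V : Matrix m n ℝ) : (n → ℝ) →L[ℝ] EuclideanSpace ℝ m :=
  LinearMap.toContinuousLinearMap
    ((WithLp.linearEquiv 2 ℝ (m → ℝ)).symm.toLinearMap ∘ₗ V.mulVecLin)

@[simp]
theorem mulVecToEuclidean_apply (V : Matrix m n ℝ) (d : n → ℝ) :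
    V.mulVecToEuclidean d = WithLp.toLp 2 (V *ᵥ d) :=
  rfl

theorem norm_mulVecToEuclidean_sq (V : Matrix m n ℝ) (d : n → ℝ) :
    ‖V.mulVecToEuclidean d‖ ^ 2 = d ⬝ᵥ (Vᵀ * V) *ᵥ d := by
  rw [← real_inner_self_eq_norm_sq, mulVecToEuclidean_apply, EuclideanSpace.inner_toLp_toLp,
    ← mulVec_mulVec, dotProduct_mulVec, vecMul_transpose]
  simp

end Matrix

theorem enorm_eq_norm_toLp {P : ℕ} (x : Fin P → ℝ) :
    _root_.enorm x = ‖WithLp.toLp 2 x‖ := by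
  simp [_root_.enorm, EuclideanSpace.norm_eq]

theorem Matrix.IsSymm.exists_hasTangentMajorantAt {n : Type*} [Fintype n]
    {M : Matrix n n ℝ} (hM : M.IsSymm) (c : ℝ) (b x : n → ℝ) :
    ∃ f', HasTangentMajorantAt (fun y => c - b ⬝ᵥ y + 1 / 2 * (y ⬝ᵥ M *ᵥ y)) f'
      (fun d => 1 / 2 * (d ⬝ᵥ M *ᵥ d)) x := by
  let D : (n → ℝ) →L[ℝ] (n → ℝ) →L[ℝ] ℝ := (dotProductBilin ℝ ℝ).toContinuousBilinearMap
  let B : (n → ℝ) →L[ℝ] (n → ℝ) →L[ℝ] ℝ :=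
    ((dotProductBilin ℝ ℝ).compl₂ M.mulVecLin).toContinuousBilinearMap
  have hB : ∀ y z, B y z = B z y := hM.dotProduct_mulVec_comm
  have := hasTangentMajorantAt_quadratic c (-D b) B hB x
  simp only [B, D, _root_.neg_apply, LinearMap.toContinuousBilinearMap_apply,
    dotProductBilin_apply_apply, LinearMap.compl₂_apply, Matrix.mulVecLin_apply,
    ← sub_eq_add_neg] at this
  exact ⟨_, this⟩

theorem exists_hasTangentMajorantAt_comp_enorm {n : Type*} [Fintype n] {P : ℕ} {ψ ν : ℝ → ℝ}
    (hψ : ContDiff ℝ 1 ψ) (hconc : ConcaveOn ℝ (Ici 0) fun t => ψ (Real.sqrt t))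
    (hν : ∀ t, t ≠ 0 → ν t = deriv ψ t / t)
    (hνlim : Tendsto (fun t => deriv ψ t / t) (𝓝[≠] 0) (𝓝 (ν 0)))
    (V : Matrix (Fin P) n ℝ) (v : Fin P → ℝ) (x : n → ℝ) :
    ∃ f', HasTangentMajorantAt (fun y => ψ (enorm (V *ᵥ y - v))) f'
      (fun d => ν (enorm (V *ᵥ x - v)) / 2 * (d ⬝ᵥ (Vᵀ * V) *ᵥ d)) x := by
  have hnorm : ∀ y, ‖WithLp.toLp 2 (-v) + V.mulVecToEuclidean y‖ = _root_.enorm (V *ᵥ y - v) :=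
    fun y => by simp [enorm_eq_norm_toLp, neg_add_eq_sub]
  have := (hasTangentMajorantAt_comp_norm (hψ.differentiable one_ne_zero)
    (hψ.continuous_deriv le_rfl).continuousAt hconc hν hνlim _).comp_affine (x := x)
      (WithLp.toLp 2 (-v)) V.mulVecToEuclidean
  simp only [hnorm, Matrix.norm_mulVecToEuclidean_sq] at this
  exact ⟨_, this⟩

theorem proposition1_tangent_majorant_general
    {N S : ℕ} (P : Fin S → ℕ)
    (Rn V0 : Matrix (Fin N) (Fin N) ℝ)
    (hRsymm : Rn.IsSymm)
    (hV0symm : V0.IsSymm)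
    (ρn : ℝ) (rn v0 : Fin N → ℝ)
    (Vs : ∀ s : Fin S, Matrix (Fin (P s)) (Fin N) ℝ)
    (vs : ∀ s : Fin S, Fin (P s) → ℝ)
    (ψ ν : Fin S → ℝ → ℝ)
    (hC1 : ∀ s, ContDiff ℝ 1 (ψ s))
    (hconc : ∀ s, ConcaveOn ℝ (Set.Ici (0 : ℝ)) (fun t => ψ s (Real.sqrt t)))
    (hν : ∀ s, ∀ t : ℝ, t ≠ 0 → ν s t = deriv (ψ s) t / t)
    (hνlim : ∀ s, Filter.Tendsto (fun t => deriv (ψ s) t / t)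
      (nhdsWithin 0 {(0 : ℝ)}ᶜ) (nhds (ν s 0)))
    (Ψ Fn : (Fin N → ℝ) → ℝ)
    (hΨ : ∀ h : Fin N → ℝ, Ψ h =
      (1 / 2) * (h ⬝ᵥ V0.mulVec h) - v0 ⬝ᵥ h +
        ∑ s, ψ s (enorm ((Vs s).mulVec h - vs s)))
    (hFn : ∀ h : Fin N → ℝ, Fn h =
      (1 / 2) * ρn - rn ⬝ᵥ h + (1 / 2) * (h ⬝ᵥ Rn.mulVec h) + Ψ h)
    (An : (Fin N → ℝ) → Matrix (Fin N) (Fin N) ℝ)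
    (hAn : ∀ h : Fin N → ℝ, An h =
      Rn + V0 + ∑ s, ν s (enorm ((Vs s).mulVec h - vs s)) • ((Vs s)ᵀ * Vs s)) :
    ∀ h : Fin N → ℝ,
      (∀ h' : Fin N → ℝ,
        Fn h' ≤ Fn h + fderiv ℝ Fn h (h' - h) +
          (1 / 2) * ((h' - h) ⬝ᵥ (An h).mulVec (h' - h))) ∧
      Fn h = Fn h + fderiv ℝ Fn h (h - h) +
        (1 / 2) * ((h - h) ⬝ᵥ (An h).mulVec (h - h)) := by
  intro h
  have hFn' : Fn = fun x => (1 / 2 * ρn - (rn + v0) ⬝ᵥ x + 1 / 2 * (x ⬝ᵥ (Rn + V0) *ᵥ x)) +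
      ∑ s, ψ s (enorm (Vs s *ᵥ x - vs s)) := by
    funext x
    simp only [hFn, hΨ, add_dotProduct, Matrix.add_mulVec, dotProduct_add]
    ring
  obtain ⟨_, hquad⟩ := (hRsymm.add hV0symm).exists_hasTangentMajorantAt (1 / 2 * ρn) (rn + v0) h
  choose _ hpen using fun s => exists_hasTangentMajorantAt_comp_enorm (hC1 s) (hconc s) (hν s)
    (hνlim s) (Vs s) (vs s) h
  obtain ⟨hderiv, hle⟩ := hFn' ▸ hquad.add (HasTangentMajorantAt.sum Finset.univ fun s _ => hpen s)
  refine ⟨fun h' => ?_, by simp⟩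
  have hcurv : ∀ d, 1 / 2 * (d ⬝ᵥ (Rn + V0) *ᵥ d) +
      ∑ s, ν s (enorm (Vs s *ᵥ h - vs s)) / 2 * (d ⬝ᵥ ((Vs s)ᵀ * Vs s) *ᵥ d) =
      1 / 2 * (d ⬝ᵥ (An h) *ᵥ d) := fun d => by
    simp only [hAn, Matrix.add_mulVec _ _ d, Matrix.sum_mulVec, Matrix.smul_mulVec, dotProduct_add,
      dotProduct_sum, dotProduct_smul, smul_eq_mul, div_mul_eq_mul_div, ← Finset.sum_div]
    ring
  have key := hle (h' - h)
  simp only [add_sub_cancel, hcurv] at key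
  rwa [hderiv.fderiv]

/-- Proposition 1: the half-quadratic surrogate Θₙ(·, h) is a tangent majorant
of the penalized least squares cost Fₙ at h. -/
theorem proposition1_tangent_majorant
    {N S : ℕ} (P : Fin S → ℕ)
    (Rn V0 : Matrix (Fin N) (Fin N) ℝ)
    (hRsymm : Rn.IsSymm) (hRpsd : Rn.PosSemidef)
    (hV0symm : V0.IsSymm) (hV0psd : V0.PosSemidef)
    (ρn : ℝ) (rn v0 : Fin N → ℝ)
    (Vs : ∀ s : Fin S, Matrix (Fin (P s)) (Fin N) ℝ)
    (vs : ∀ s : Fin S, Fin (P s) → ℝ)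
    (ψ ν : Fin S → ℝ → ℝ) (νbar : ℝ)
    (heven : ∀ s, ∀ t : ℝ, ψ s (-t) = ψ s t)
    (hC1 : ∀ s, ContDiff ℝ 1 (ψ s))
    (hconc : ∀ s, ConcaveOn ℝ (Set.Ici (0 : ℝ)) (fun t => ψ s (Real.sqrt t)))
    (hν : ∀ s, ∀ t : ℝ, t ≠ 0 → ν s t = deriv (ψ s) t / t)
    (hνlim : ∀ s, Filter.Tendsto (fun t => deriv (ψ s) t / t)
      (nhdsWithin 0 {(0 : ℝ)}ᶜ) (nhds (ν s 0)))
    (hνbound : ∀ s, ∀ t : ℝ, 0 ≤ ν s t ∧ ν s t ≤ νbar)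
    (Ψ Fn : (Fin N → ℝ) → ℝ)
    (hΨ : ∀ h : Fin N → ℝ, Ψ h =
      (1 / 2) * (h ⬝ᵥ V0.mulVec h) - v0 ⬝ᵥ h +
        ∑ s, ψ s (enorm ((Vs s).mulVec h - vs s)))
    (hFn : ∀ h : Fin N → ℝ, Fn h =
      (1 / 2) * ρn - rn ⬝ᵥ h + (1 / 2) * (h ⬝ᵥ Rn.mulVec h) + Ψ h)
    (An : (Fin N → ℝ) → Matrix (Fin N) (Fin N) ℝ)
    (hAn : ∀ h : Fin N → ℝ, An h =
      Rn + V0 + ∑ s, ν s (enorm ((Vs s).mulVec h - vs s)) • ((Vs s)ᵀ * Vs s)) :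
    ∀ h : Fin N → ℝ,
      (∀ h' : Fin N → ℝ,
        Fn h' ≤ Fn h + fderiv ℝ Fn h (h' - h) +
          (1 / 2) * ((h' - h) ⬝ᵥ (An h).mulVec (h' - h))) ∧
      Fn h = Fn h + fderiv ℝ Fn h (h - h) +
        (1 / 2) * ((h - h) ⬝ᵥ (An h).mulVec (h - h)) :=
  proposition1_tangent_majorant_general P Rn V0 hRsymm hV0symm ρn rn v0 Vs vs ψ ν hC1 hconc hν hνlim
    Ψ Fn hΨ hFn An hAn
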